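/- Let θ_Q be the canonical 1-form on T*Q = E × (E →L[ℝ] ℝ), i.e. θ_Q(q,p)(v,w) := p(v) for (v,w) ∈ E × (E →L[ℝ] ℝ). Then the pullback of θ_Q by the forced discrete Legendre transform FL⁺ equals θ⁺: for every x ∈ E × E and every U ∈ E × E, θ_Q(FL⁺(x))( (fderiv ℝ FL⁺ x)(U) ) = θ⁺(x)(U). Analogously, θ_Q(FL⁻(x))( (fderiv ℝ FL⁻ x)(U) ) = θ⁻(x)(U). -/

import Mathlib

open ContinuousLinearMap

variable {E : Type*} [NormedAddCommGroup E] [NormedSpace ℝ E] [FiniteDimensional ℝ E]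

/-- Partial Fréchet derivative in the first variable. -/
noncomputable def D1 (L : E × E → ℝ) (x : E × E) : E →L[ℝ] ℝ :=
  fderiv ℝ (fun a => L (a, x.2)) x.1

/-- Partial Fréchet derivative in the second variable. -/
noncomputable def D2 (L : E × E → ℝ) (x : E × E) : E →L[ℝ] ℝ :=
  fderiv ℝ (fun b => L (x.1, b)) x.2

/-- The force 1-form `f_d` on `E × E`. -/
noncomputable def fd (fm fp : E × E → (E →L[ℝ] ℝ)) (x : E × E) : (E × E) →L[ℝ] ℝ :=
  (fm x).comp (ContinuousLinearMap.fst ℝ E E) + (fp x).comp (ContinuousLinearMap.snd ℝ E E)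

/-- The 1-form `θ⁺` on `E × E`. -/
noncomputable def thetaP (Ld : E × E → ℝ) (fp : E × E → (E →L[ℝ] ℝ)) (x : E × E) :
    (E × E) →L[ℝ] ℝ := (D2 Ld x + fp x).comp (ContinuousLinearMap.snd ℝ E E)

/-- The 1-form `θ⁻` on `E × E`. -/
noncomputable def thetaM (Ld : E × E → ℝ) (fm : E × E → (E →L[ℝ] ℝ)) (x : E × E) :
    (E × E) →L[ℝ] ℝ := -((D1 Ld x + fm x).comp (ContinuousLinearMap.fst ℝ E E))

/-- The exterior derivative of a 1-form `α` on `E × E`, as a function of two vectors. -/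
noncomputable def extd (α : E × E → ((E × E) →L[ℝ] ℝ)) (x : E × E) (U V : E × E) : ℝ :=
  fderiv ℝ α x U V - fderiv ℝ α x V U

/-- The 2-form `ω⁺ := -dθ⁺` on `E × E`. -/
noncomputable def omegaP (Ld : E × E → ℝ) (fp : E × E → (E →L[ℝ] ℝ)) (x : E × E)
    (U V : E × E) : ℝ := -extd (thetaP Ld fp) x U V

/-- The 2-form `ω⁻ := -dθ⁻` on `E × E`. -/
noncomputable def omegaM (Ld : E × E → ℝ) (fm : E × E → (E →L[ℝ] ℝ)) (x : E × E)
    (U V : E × E) : ℝ := -extd (thetaM Ld fm) x U V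

/-- The forced discrete Legendre transform `FL⁺`. -/
noncomputable def FLp (Ld : E × E → ℝ) (fp : E × E → (E →L[ℝ] ℝ)) (x : E × E) :
    E × (E →L[ℝ] ℝ) := (x.2, D2 Ld x + fp x)

/-- The forced discrete Legendre transform `FL⁻`. -/
noncomputable def FLm (Ld : E × E → ℝ) (fm : E × E → (E →L[ℝ] ℝ)) (x : E × E) :
    E × (E →L[ℝ] ℝ) := (x.1, -D1 Ld x - fm x)

lemma D1_eq' (Ld : E × E → ℝ) (h : Differentiable ℝ Ld) (x : E × E) :
    D1 Ld x = (fderiv ℝ Ld x).comp (ContinuousLinearMap.inl ℝ E E) := by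
  have h1 : HasFDerivAt (fun a : E => (a, x.2)) (ContinuousLinearMap.inl ℝ E E) x.1 :=
    HasFDerivAt.prodMk (hasFDerivAt_id _) (hasFDerivAt_const _ _)
  exact ((h x).hasFDerivAt.comp x.1 h1).fderiv

lemma D2_eq' (Ld : E × E → ℝ) (h : Differentiable ℝ Ld) (x : E × E) :
    D2 Ld x = (fderiv ℝ Ld x).comp (ContinuousLinearMap.inr ℝ E E) := by
  have h1 : HasFDerivAt (fun b : E => (x.1, b)) (ContinuousLinearMap.inr ℝ E E) x.2 :=
    HasFDerivAt.prodMk (hasFDerivAt_const _ _) (hasFDerivAt_id _)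
  exact ((h x).hasFDerivAt.comp x.2 h1).fderiv

lemma D1_diff (Ld : E × E → ℝ) (hLd : ContDiff ℝ (⊤ : ℕ∞) Ld) :
    Differentiable ℝ (D1 Ld) := by
  have h1 : Differentiable ℝ (fun x : E × E => fderiv ℝ Ld x) :=
    (hLd.fderiv_right (m := 1) (by exact WithTop.coe_le_coe.mpr le_top)).differentiable one_ne_zero
  have h2 := h1.clm_comp
    (differentiable_const (ContinuousLinearMap.inl ℝ E E) : Differentiable ℝ _)
  have : D1 Ld = fun x => (fderiv ℝ Ld x).comp (ContinuousLinearMap.inl ℝ E E) :=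
    funext (D1_eq' Ld (hLd.differentiable (by simp)))
  rw [this]; exact h2

lemma D2_diff (Ld : E × E → ℝ) (hLd : ContDiff ℝ (⊤ : ℕ∞) Ld) :
    Differentiable ℝ (D2 Ld) := by
  have h1 : Differentiable ℝ (fun x : E × E => fderiv ℝ Ld x) :=
    (hLd.fderiv_right (m := 1) (by exact WithTop.coe_le_coe.mpr le_top)).differentiable one_ne_zero
  have h2 := h1.clm_comp
    (differentiable_const (ContinuousLinearMap.inr ℝ E E) : Differentiable ℝ _)
  have : D2 Ld = fun x => (fderiv ℝ Ld x).comp (ContinuousLinearMap.inr ℝ E E) :=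
    funext (D2_eq' Ld (hLd.differentiable (by simp)))
  rw [this]; exact h2

/-- **Pullback of the canonical 1-form by the forced discrete Legendre transforms.**
With `θ_Q(q,p)(v,w) := p v` the canonical 1-form on `T*Q = E × (E →L[ℝ] ℝ)`, the pullback
of `θ_Q` by `FL⁺` is `θ⁺`, and the pullback of `θ_Q` by `FL⁻` is `θ⁻`. -/
theorem pullback_canonical_one_form
    (Ld : E × E → ℝ) (fm fp : E × E → (E →L[ℝ] ℝ))
    (hLd : ContDiff ℝ (⊤ : ℕ∞) Ld) (hfm : ContDiff ℝ (⊤ : ℕ∞) fm) (hfp : ContDiff ℝ (⊤ : ℕ∞) fp) :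
    (∀ (x : E × E) (U : E × E),
        (FLp Ld fp x).2 ((fderiv ℝ (FLp Ld fp) x U).1) = thetaP Ld fp x U)
    ∧ (∀ (x : E × E) (U : E × E),
        (FLm Ld fm x).2 ((fderiv ℝ (FLm Ld fm) x U).1) = thetaM Ld fm x U) := by
  constructor
  · intro x U
    have hG : Differentiable ℝ (fun x : E × E => D2 Ld x + fp x) :=
      (D2_diff Ld hLd).add (hfp.differentiable (by simp))
    have hF : HasFDerivAt (FLp Ld fp)
        ((ContinuousLinearMap.snd ℝ E E).prod (fderiv ℝ (fun x : E × E => D2 Ld x + fp x) x)) x :=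
      HasFDerivAt.prodMk (hasFDerivAt_snd) (hG x).hasFDerivAt
    rw [hF.fderiv]
    simp [FLp, thetaP]
  · intro x U
    have hG : Differentiable ℝ (fun x : E × E => -D1 Ld x - fm x) :=
      ((D1_diff Ld hLd).neg).sub (hfm.differentiable (by simp))
    have hF : HasFDerivAt (FLm Ld fm)
        ((ContinuousLinearMap.fst ℝ E E).prod
          (fderiv ℝ (fun x : E × E => -D1 Ld x - fm x) x)) x :=
      HasFDerivAt.prodMk (hasFDerivAt_fst) (hG x).hasFDerivAt
    rw [hF.fderiv]
    simp [FLm, thetaM]; ring
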